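/- Internalisation of GCIs: a SHIQ concept C is satisfiable with respect to a terminology T and role hierarchy R if and only if the concept C ⊓ C_T ⊓ ∀U.C_T is satisfiable with respect to the extended role hierarchy R_U (with empty terminology), where C_T is the conjunction over all GCIs C_i ⊑ D_i in T of ¬C_i ⊔ D_i, U is a fresh transitive role, and R_U adds R ⊑ U and Inv(R) ⊑ U for every role R occurring in T, C, or R. -/

import Mathlib

namespace SHIQ

/-- Roles: role names and their inverses. -/
inductive SRole (Rn : Type) : Type where
  | name : Rn → SRole Rn
  | inv  : Rn → SRole Rn

/-- The function `Inv` on roles. -/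
def SRole.Inv {Rn : Type} : SRole Rn → SRole Rn
  | .name r => .inv r
  | .inv r  => .name r

/-- The underlying role name of a (possibly inverse) role. -/
def SRole.base {Rn : Type} : SRole Rn → Rn
  | .name r => r
  | .inv r  => r

/-- SHIQ concepts over concept names `Cn` and role names `Rn`. -/
inductive Concept (Cn Rn : Type) : Type where
  | atom : Cn → Concept Cn Rn
  | conj : Concept Cn Rn → Concept Cn Rn → Concept Cn Rn
  | disj : Concept Cn Rn → Concept Cn Rn → Concept Cn Rn
  | neg  : Concept Cn Rn → Concept Cn Rn
  | ex   : SRole Rn → Concept Cn Rn → Concept Cn Rn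
  | all  : SRole Rn → Concept Cn Rn → Concept Cn Rn
  | atLeast : ℕ → SRole Rn → Concept Cn Rn → Concept Cn Rn
  | atMost  : ℕ → SRole Rn → Concept Cn Rn → Concept Cn Rn

/-- An interpretation `I = (Δ, ·^I)`. -/
structure Interp (Cn Rn : Type) where
  Dom : Type
  dom_nonempty : Nonempty Dom
  cI : Cn → Set Dom
  rI : Rn → Set (Dom × Dom)

/-- Interpretation of (possibly inverse) roles. -/
def Interp.roleI {Cn Rn : Type} (I : Interp Cn Rn) : SRole Rn → Set (I.Dom × I.Dom)
  | .name r => I.rI r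
  | .inv r  => {p | (p.2, p.1) ∈ I.rI r}

/-- Extension of a concept in an interpretation. -/
def Interp.conceptI {Cn Rn : Type} (I : Interp Cn Rn) : Concept Cn Rn → Set I.Dom
  | .atom a => I.cI a
  | .conj c d => I.conceptI c ∩ I.conceptI d
  | .disj c d => I.conceptI c ∪ I.conceptI d
  | .neg c => (I.conceptI c)ᶜ
  | .ex S c => {x | ∃ y, (x, y) ∈ I.roleI S ∧ y ∈ I.conceptI c}
  | .all S c => {x | ∀ y, (x, y) ∈ I.roleI S → y ∈ I.conceptI c}
  | .atLeast n S c => {x | (n : ℕ∞) ≤ {y | (x, y) ∈ I.roleI S ∧ y ∈ I.conceptI c}.encard}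
  | .atMost n S c => {x | {y | (x, y) ∈ I.roleI S ∧ y ∈ I.conceptI c}.encard ≤ (n : ℕ∞)}

/-- `I` interprets each transitive role name in `Rp` as a transitive relation. -/
def Interp.respectsTrans {Cn Rn : Type} (I : Interp Cn Rn) (Rp : Set Rn) : Prop :=
  ∀ r ∈ Rp, ∀ x y z : I.Dom, (x, y) ∈ I.rI r → (y, z) ∈ I.rI r → (x, z) ∈ I.rI r

/-- A role hierarchy: a set of role inclusion axioms `R ⊑ S`. -/
abbrev RoleHierarchy (Rn : Type) := Set (SRole Rn × SRole Rn)

/-- `I` satisfies the role hierarchy `H`. -/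
def Interp.modelsH {Cn Rn : Type} (I : Interp Cn Rn) (H : RoleHierarchy Rn) : Prop :=
  ∀ p ∈ H, I.roleI p.1 ⊆ I.roleI p.2

/-- The relation `⊑*`: transitive-reflexive closure of `⊑` over `H` together with
the inverse axioms `Inv(R) ⊑ Inv(S)`. -/
def subRole {Rn : Type} (H : RoleHierarchy Rn) : SRole Rn → SRole Rn → Prop :=
  Relation.ReflTransGen (fun R S => (R, S) ∈ H ∨ (R.Inv, S.Inv) ∈ H)

/-- A terminology: a finite list of GCIs `C ⊑ D`. -/
abbrev Terminology (Cn Rn : Type) := List (Concept Cn Rn × Concept Cn Rn)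

/-- `I` satisfies the terminology `T`. -/
def Interp.modelsT {Cn Rn : Type} (I : Interp Cn Rn) (T : Terminology Cn Rn) : Prop :=
  ∀ p ∈ T, I.conceptI p.1 ⊆ I.conceptI p.2

/-- The set of roles occurring in a concept. -/
def Concept.rolesOf {Cn Rn : Type} : Concept Cn Rn → Set (SRole Rn)
  | .atom _ => ∅
  | .conj c d => c.rolesOf ∪ d.rolesOf
  | .disj c d => c.rolesOf ∪ d.rolesOf
  | .neg c => c.rolesOf
  | .ex S c => insert S c.rolesOf
  | .all S c => insert S c.rolesOf
  | .atLeast _ S c => insert S c.rolesOf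
  | .atMost _ S c => insert S c.rolesOf

/-- The set of roles occurring in a terminology. -/
def Terminology.rolesOf {Cn Rn : Type} (T : Terminology Cn Rn) : Set (SRole Rn) :=
  {S | ∃ p ∈ T, S ∈ p.1.rolesOf ∪ p.2.rolesOf}

/-- The set of roles occurring in a role hierarchy. -/
def RoleHierarchy.rolesOf {Rn : Type} (H : RoleHierarchy Rn) : Set (SRole Rn) :=
  {S | ∃ p ∈ H, S = p.1 ∨ S = p.2}

/-- The concept `¬C ⊔ D` corresponding to a GCI `C ⊑ D`. -/
def gciConcept {Cn Rn : Type} (p : Concept Cn Rn × Concept Cn Rn) : Concept Cn Rn :=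
  .disj (.neg p.1) p.2

/-- `C_T`: the conjunction of `¬C_i ⊔ D_i` over all GCIs `C_i ⊑ D_i` of `T`
(for the empty terminology we take the tautology `A ⊔ ¬A`). -/
def CT {Cn Rn : Type} (a : Cn) : Terminology Cn Rn → Concept Cn Rn
  | [] => .disj (.atom a) (.neg (.atom a))
  | [p] => gciConcept p
  | p :: q :: T => .conj (gciConcept p) (CT a (q :: T))

/-- `R_U`: the role hierarchy `H` extended by `R ⊑ U` and `Inv(R) ⊑ U` for every
role `R` in the given set of roles. -/
def addU {Rn : Type} (H : RoleHierarchy Rn) (roles : Set (SRole Rn)) (u : Rn) :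
    RoleHierarchy Rn :=
  H ∪ {p | ∃ S ∈ roles, p = (S, SRole.name u) ∨ p = (S.Inv, SRole.name u)}

/-!
Given a model of `T` and `H` in which `C` is satisfied, interpret the fresh role `U` as the
universal relation: concepts built from the roles of `C`, `T` and `H` keep their extensions, so
`C_T` holds everywhere and `C ⊓ C_T ⊓ ∀U.C_T` is satisfied. Conversely, in a model of `R_U` with
`U` transitive, every role of `C`, `T` and `H` is contained in `U`, so the set consisting of a
witness `x` and its `U`-successors is closed under these roles. Restricting the model to this set
preserves every concept over these roles, and `C_T` holds at each of its points, so the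
restriction is a model of `T`.
-/

lemma CT_rolesOf_subset {Cn Rn : Type} (a : Cn) (T : Terminology Cn Rn) :
    (CT a T).rolesOf ⊆ T.rolesOf := by
  fun_induction CT a T with
  | case1 => simp [Concept.rolesOf]
  | case2 p => exact fun S hS => ⟨p, List.mem_singleton_self p, hS⟩
  | case3 p q T ih =>
    rintro S (hS | hS)
    · exact ⟨p, List.mem_cons_self, hS⟩
    · obtain ⟨r, hr, hSr⟩ := ih hS
      exact ⟨r, List.mem_cons_of_mem _ hr, hSr⟩

namespace Interp

variable {Cn Rn : Type}

lemma modelsH_mono {I : Interp Cn Rn} {H H' : RoleHierarchy Rn} (h : I.modelsH H')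
    (hH : H ⊆ H') : I.modelsH H :=
  fun p hp => h p (hH hp)

lemma respectsTrans_mono {I : Interp Cn Rn} {Rp Rp' : Set Rn} (h : I.respectsTrans Rp')
    (hRp : Rp ⊆ Rp') : I.respectsTrans Rp :=
  fun r hr => h r (hRp hr)

lemma mem_conceptI_CT {I : Interp Cn Rn} (a : Cn) (T : Terminology Cn Rn) (x : I.Dom) :
    x ∈ I.conceptI (CT a T) ↔ ∀ p ∈ T, x ∈ I.conceptI p.1 → x ∈ I.conceptI p.2 := by
  fun_induction CT a T with
  | case1 => simp [conceptI]
  | case2 p =>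
    rw [List.forall_mem_singleton]
    simp [conceptI, gciConcept, imp_iff_not_or]
  | case3 p q T ih =>
    rw [List.forall_mem_cons, ← ih]
    simp [conceptI, gciConcept, imp_iff_not_or]

lemma modelsT_iff_forall_mem_CT {I : Interp Cn Rn} (a : Cn) (T : Terminology Cn Rn) :
    I.modelsT T ↔ ∀ x, x ∈ I.conceptI (CT a T) := by
  simp only [modelsT, Set.subset_def, mem_conceptI_CT]
  exact ⟨fun h x p hp => h p hp x, fun h p hp x => h x p hp⟩

structure IsRoleClosedEmbedding (J I : Interp Cn Rn) (s : Set (SRole Rn)) (f : J.Dom → I.Dom) :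
    Prop where
  injective : Function.Injective f
  mem_cI_iff : ∀ A d, d ∈ J.cI A ↔ f d ∈ I.cI A
  mem_roleI_iff : ∀ S ∈ s, ∀ d d', (d, d') ∈ J.roleI S ↔ (f d, f d') ∈ I.roleI S
  mem_range_of_mem_roleI : ∀ S ∈ s, ∀ d y, (f d, y) ∈ I.roleI S → y ∈ Set.range f

namespace IsRoleClosedEmbedding

variable {J I : Interp Cn Rn} {s : Set (SRole Rn)} {f : J.Dom → I.Dom}

lemma image_successors (hf : J.IsRoleClosedEmbedding I s f) {S : SRole Rn} (hS : S ∈ s)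
    {P : J.Dom → Prop} {Q : I.Dom → Prop} (hPQ : ∀ d, P d ↔ Q (f d)) (d : J.Dom) :
    f '' {d' | (d, d') ∈ J.roleI S ∧ P d'} = {y | (f d, y) ∈ I.roleI S ∧ Q y} := by
  ext y
  constructor
  · rintro ⟨d', ⟨hd', hP⟩, rfl⟩
    exact ⟨(hf.mem_roleI_iff S hS d d').1 hd', (hPQ d').1 hP⟩
  · rintro ⟨hy, hQ⟩
    obtain ⟨d', rfl⟩ := hf.mem_range_of_mem_roleI S hS d y hy
    exact ⟨d', ⟨(hf.mem_roleI_iff S hS d d').2 hy, (hPQ d').2 hQ⟩, rfl⟩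

lemma mem_conceptI_iff (hf : J.IsRoleClosedEmbedding I s f) {e : Concept Cn Rn}
    (he : e.rolesOf ⊆ s) (d : J.Dom) : d ∈ J.conceptI e ↔ f d ∈ I.conceptI e := by
  induction e generalizing d with
  | atom A => exact hf.mem_cI_iff A d
  | conj c c' ih ih' =>
    exact and_congr (ih (Set.subset_union_left.trans he) d)
      (ih' (Set.subset_union_right.trans he) d)
  | disj c c' ih ih' =>
    exact or_congr (ih (Set.subset_union_left.trans he) d)
      (ih' (Set.subset_union_right.trans he) d)
  | neg c ih => exact not_congr (ih he d)
  | ex S c ih =>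
    have hsucc := hf.image_successors (he (Set.mem_insert S _))
      (ih ((Set.subset_insert S _).trans he)) d
    exact Set.image_nonempty.symm.trans (congrArg Set.Nonempty hsucc).to_iff
  | all S c ih =>
    have hS := he (Set.mem_insert S _)
    have ih := ih ((Set.subset_insert S _).trans he)
    constructor
    · intro h y hy
      obtain ⟨d', rfl⟩ := hf.mem_range_of_mem_roleI S hS d y hy
      exact (ih d').1 (h d' ((hf.mem_roleI_iff S hS d d').2 hy))
    · intro h d' hd'
      exact (ih d').2 (h (f d') ((hf.mem_roleI_iff S hS d d').1 hd'))
  | atLeast n S c ih =>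
    have hsucc := hf.image_successors (he (Set.mem_insert S _))
      (ih ((Set.subset_insert S _).trans he)) d
    show (n : ℕ∞) ≤ _ ↔ (n : ℕ∞) ≤ _
    rw [← hsucc, hf.injective.encard_image]
  | atMost n S c ih =>
    have hsucc := hf.image_successors (he (Set.mem_insert S _))
      (ih ((Set.subset_insert S _).trans he)) d
    show _ ≤ (n : ℕ∞) ↔ _ ≤ (n : ℕ∞)
    rw [← hsucc, hf.injective.encard_image]

end IsRoleClosedEmbedding

def withUniversal (I : Interp Cn Rn) (u : Rn) : Interp Cn Rn where
  Dom := I.Dom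
  dom_nonempty := I.dom_nonempty
  cI := I.cI
  rI r := {p | r = u ∨ p ∈ I.rI r}

section withUniversal

variable (I : Interp Cn Rn) (u : Rn)

lemma roleI_withUniversal_of_base_ne {S : SRole Rn} (h : S.base ≠ u) :
    (I.withUniversal u).roleI S = I.roleI S := by
  cases S <;> exact Set.ext fun _ => or_iff_right h

lemma isRoleClosedEmbedding_withUniversal :
    (I.withUniversal u).IsRoleClosedEmbedding I {S | S.base ≠ u} id where
  injective := Function.injective_id
  mem_cI_iff _ _ := Iff.rfl
  mem_roleI_iff S hS _ _ := by rw [roleI_withUniversal_of_base_ne I u hS]; rfl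
  mem_range_of_mem_roleI _ _ _ y _ := ⟨y, rfl⟩

variable {I u}

lemma respectsTrans_withUniversal {Rp : Set Rn} (h : I.respectsTrans Rp) :
    (I.withUniversal u).respectsTrans (insert u Rp) := by
  intro r hr x y z hxy hyz
  rcases hxy with hru | hxy
  · exact Or.inl hru
  rcases hyz with hru | hyz
  · exact Or.inl hru
  rcases hr with hru | hr
  · exact Or.inl hru
  · exact Or.inr (h r hr x y z hxy hyz)

lemma modelsH_addU_withUniversal {H : RoleHierarchy Rn} (h : I.modelsH H)
    (hfresh : ∀ S ∈ H.rolesOf, S.base ≠ u) (roles : Set (SRole Rn)) :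
    (I.withUniversal u).modelsH (addU H roles u) := by
  rintro p (hp | ⟨S, -, rfl | rfl⟩)
  · rw [roleI_withUniversal_of_base_ne I u (hfresh _ ⟨p, hp, Or.inl rfl⟩),
      roleI_withUniversal_of_base_ne I u (hfresh _ ⟨p, hp, Or.inr rfl⟩)]
    exact h p hp
  all_goals exact fun _ _ => Or.inl rfl

end withUniversal

def restrict (I : Interp Cn Rn) (D : Set I.Dom) (hD : D.Nonempty) : Interp Cn Rn where
  Dom := D
  dom_nonempty := hD.to_subtype
  cI A := {d | d.val ∈ I.cI A}
  rI r := {p | (p.1.val, p.2.val) ∈ I.rI r}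

section restrict

variable {I : Interp Cn Rn} {D : Set I.Dom} (hD : D.Nonempty)

lemma mem_roleI_restrict {S : SRole Rn} {d d' : D} :
    (d, d') ∈ (I.restrict D hD).roleI S ↔ (d.val, d'.val) ∈ I.roleI S := by
  cases S <;> rfl

lemma modelsH_restrict {H : RoleHierarchy Rn} (h : I.modelsH H) :
    (I.restrict D hD).modelsH H :=
  fun p hp _ hq => (mem_roleI_restrict hD).2 (h p hp ((mem_roleI_restrict hD).1 hq))

lemma respectsTrans_restrict {Rp : Set Rn} (h : I.respectsTrans Rp) :
    (I.restrict D hD).respectsTrans Rp :=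
  fun r hr x y z => h r hr x.val y.val z.val

lemma isRoleClosedEmbedding_restrict {s : Set (SRole Rn)}
    (hD_closed : ∀ S ∈ s, ∀ y z, y ∈ D → (y, z) ∈ I.roleI S → z ∈ D) :
    (I.restrict D hD).IsRoleClosedEmbedding I s Subtype.val where
  injective := Subtype.val_injective
  mem_cI_iff _ _ := Iff.rfl
  mem_roleI_iff _ _ _ _ := mem_roleI_restrict hD
  mem_range_of_mem_roleI S hS d y hy := ⟨⟨y, hD_closed S hS d.val y d.2 hy⟩, rfl⟩

end restrict

def selfAndSuccessors (I : Interp Cn Rn) (u : Rn) (x : I.Dom) : Set I.Dom :=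
  insert x {y | (x, y) ∈ I.rI u}

lemma mem_selfAndSuccessors_of_mem_roleI {I : Interp Cn Rn} {u : Rn} {x y z : I.Dom}
    {S : SRole Rn} (hu : ∀ x y z, (x, y) ∈ I.rI u → (y, z) ∈ I.rI u → (x, z) ∈ I.rI u)
    (hS : I.roleI S ⊆ I.rI u) (hy : y ∈ I.selfAndSuccessors u x) (hyz : (y, z) ∈ I.roleI S) :
    z ∈ I.selfAndSuccessors u x := by
  refine Set.mem_insert_of_mem _ ?_
  rcases hy with rfl | hy
  · exact hS hyz
  · exact hu x y z hy (hS hyz)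

lemma roleI_subset_of_modelsH_addU {I : Interp Cn Rn} {H : RoleHierarchy Rn}
    {roles : Set (SRole Rn)} {u : Rn} (h : I.modelsH (addU H roles u)) {S : SRole Rn}
    (hS : S ∈ roles) : I.roleI S ⊆ I.rI u :=
  h _ (Or.inr ⟨S, hS, Or.inl rfl⟩)

end Interp

open Interp in
theorem internalisation_sat_general {Cn Rn : Type} (a : Cn) (Rp : Set Rn)
    (T : Terminology Cn Rn) (H : RoleHierarchy Rn) (c : Concept Cn Rn) (u : Rn)
    (roles : Set (SRole Rn))
    (hroles : roles = c.rolesOf ∪ Terminology.rolesOf T ∪ RoleHierarchy.rolesOf H)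
    (hfresh : ∀ S ∈ roles, S.base ≠ u) :
    (∃ I : Interp Cn Rn, I.respectsTrans Rp ∧ I.modelsT T ∧ I.modelsH H ∧
        (I.conceptI c).Nonempty) ↔
    (∃ I : Interp Cn Rn, I.respectsTrans (insert u Rp) ∧ I.modelsH (addU H roles u) ∧
        (I.conceptI (.conj c (.conj (CT a T)
          (.all (SRole.name u) (CT a T))))).Nonempty) := by
  have hc : c.rolesOf ⊆ roles := hroles ▸ fun S hS => Or.inl (Or.inl hS)
  have hCT : (CT a T).rolesOf ⊆ roles :=
    hroles ▸ fun S hS => Or.inl (Or.inr (CT_rolesOf_subset a T hS))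
  have hH : H.rolesOf ⊆ roles := hroles ▸ fun S hS => Or.inr hS
  constructor
  · rintro ⟨I, hTr, hT, hHI, x, hx⟩
    have hemb := I.isRoleClosedEmbedding_withUniversal u
    have hCT_univ : ∀ y, y ∈ (I.withUniversal u).conceptI (CT a T) := fun y =>
      (hemb.mem_conceptI_iff (fun S hS => hfresh S (hCT hS)) y).2
        ((modelsT_iff_forall_mem_CT a T).1 hT y)
    exact ⟨I.withUniversal u, respectsTrans_withUniversal hTr,
      modelsH_addU_withUniversal hHI (fun S hS => hfresh S (hH hS)) roles,
      x, (hemb.mem_conceptI_iff (fun S hS => hfresh S (hc hS)) x).2 hx,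
      hCT_univ x, fun y _ => hCT_univ y⟩
  · rintro ⟨I, hTr, hHI, x, hx, hxCT, hxall⟩
    have hD : (I.selfAndSuccessors u x).Nonempty := ⟨x, Set.mem_insert x _⟩
    have hemb := isRoleClosedEmbedding_restrict hD fun S hS _ _ =>
      mem_selfAndSuccessors_of_mem_roleI (hTr u (Set.mem_insert u Rp))
        (roleI_subset_of_modelsH_addU hHI hS)
    have hD_CT : ∀ y ∈ I.selfAndSuccessors u x, y ∈ I.conceptI (CT a T) :=
      Set.forall_mem_insert.2 ⟨hxCT, hxall⟩
    exact ⟨I.restrict _ hD,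
      respectsTrans_restrict hD (respectsTrans_mono hTr (Set.subset_insert u Rp)),
      (modelsT_iff_forall_mem_CT a T).2 fun d => (hemb.mem_conceptI_iff hCT d).2 (hD_CT d.val d.2),
      modelsH_restrict hD (modelsH_mono hHI Set.subset_union_left),
      ⟨x, Set.mem_insert x _⟩, (hemb.mem_conceptI_iff hc _).2 hx⟩

/-- internalisation of GCIs. `c` is satisfiable w.r.t. terminology `T`
and role hierarchy `H` iff `c ⊓ C_T ⊓ ∀U.C_T` is satisfiable w.r.t. the extended
role hierarchy `R_U` (with empty terminology), where `U = u` is a fresh transitive role. -/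
theorem internalisation_sat {Cn Rn : Type} (a : Cn) (Rp : Set Rn)
    (T : Terminology Cn Rn) (H : RoleHierarchy Rn) (c : Concept Cn Rn) (u : Rn)
    (roles : Set (SRole Rn))
    (hroles : roles = c.rolesOf ∪ Terminology.rolesOf T ∪ RoleHierarchy.rolesOf H)
    (hfresh : ∀ S ∈ roles, S.base ≠ u) (hfreshRp : u ∉ Rp) :
    (∃ I : Interp Cn Rn, I.respectsTrans Rp ∧ I.modelsT T ∧ I.modelsH H ∧
        (I.conceptI c).Nonempty) ↔
    (∃ I : Interp Cn Rn, I.respectsTrans (insert u Rp) ∧ I.modelsH (addU H roles u) ∧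
        (I.conceptI (.conj c (.conj (CT a T)
          (.all (SRole.name u) (CT a T))))).Nonempty) :=
  internalisation_sat_general a Rp T H c u roles hroles hfresh

end SHIQ
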